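/- arXiv:2312.13917 — 2 statements merged into one kernel-verified Lean document; each statement's English description precedes it below -/
import Mathlib

section
/- Let f : ℕ → ℝ be given by f(k) = λ₂k² + λ₁k + λ₀ with f(k) ≥ 0 for all k ≥ 1. If √(f(2k)) ≤ √(f(k)) + 2√k for all k ≥ 1, then λ₂ ≤ 0 (hence λ₂ = 0 if additionally λ₂ ≥ 0). -/
/-!
Dividing the doubling inequality by `k` and letting `k → ∞`: since `f k / k² → λ₂`, both
`√(f k) / k → √λ₂` and `√(f (2k)) / k → 2√λ₂`, while `2√k / k → 0`. Hence `2√λ₂ ≤ √λ₂`, so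
`√λ₂ = 0`, i.e. `λ₂ ≤ 0`.
-/

open Filter Topology

lemma tendsto_quadratic_div_sq (a b c : ℝ) :
    Tendsto (fun k : ℕ => (a * (k : ℝ) ^ 2 + b * k + c) / (k : ℝ) ^ 2) atTop (𝓝 a) := by
  have hinv : Tendsto (fun k : ℕ => (k : ℝ)⁻¹) atTop (𝓝 0) :=
    tendsto_inv_atTop_zero.comp tendsto_natCast_atTop_atTop
  have hlim : Tendsto (fun k : ℕ => a + b * (k : ℝ)⁻¹ + c * ((k : ℝ)⁻¹) ^ 2) atTop (𝓝 a) := by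
    simpa using ((hinv.const_mul b).const_add a).add ((hinv.pow 2).const_mul c)
  refine hlim.congr' ?_
  filter_upwards [eventually_ne_atTop 0] with k hk
  field_simp

lemma tendsto_sqrt_natCast_div_natCast :
    Tendsto (fun k : ℕ => √(k : ℝ) / k) atTop (𝓝 0) := by
  simp only [Real.sqrt_div_self]
  exact tendsto_inv_atTop_zero.comp (Real.tendsto_sqrt_atTop.comp tendsto_natCast_atTop_atTop)

lemma tendsto_sqrt_div_natCast {u : ℕ → ℝ} {a : ℝ}
    (hu : Tendsto (fun k : ℕ => u k / (k : ℝ) ^ 2) atTop (𝓝 a)) :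
    Tendsto (fun k : ℕ => √(u k) / k) atTop (𝓝 √a) := by
  refine (Real.continuous_sqrt.tendsto a).comp hu |>.congr fun k => ?_
  simp [Real.sqrt_div' _ (sq_nonneg (k : ℝ))]

lemma nonpos_of_sqrt_two_mul_le_add {u e : ℕ → ℝ} {a : ℝ}
    (hu : Tendsto (fun k : ℕ => u k / (k : ℝ) ^ 2) atTop (𝓝 a))
    (he : Tendsto (fun k : ℕ => e k / k) atTop (𝓝 0))
    (hdbl : ∀ᶠ k in atTop, √(u (2 * k)) ≤ √(u k) + e k) :
    a ≤ 0 := by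
  have hv := tendsto_sqrt_div_natCast hu
  have hv2 : Tendsto (fun k : ℕ => 2 * (√(u (2 * k)) / ↑(2 * k))) atTop (𝓝 (2 * √a)) :=
    (hv.comp (tendsto_id.const_mul_atTop' two_pos)).const_mul 2
  have hle : 2 * √a ≤ √a + 0 := by
    refine le_of_tendsto_of_tendsto hv2 (hv.add he) ?_
    filter_upwards [hdbl, eventually_gt_atTop 0] with k hk hk0
    have hk0' : (0 : ℝ) < k := by exact_mod_cast hk0
    calc 2 * (√(u (2 * k)) / ↑(2 * k)) = √(u (2 * k)) / k := by push_cast; field_simp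
      _ ≤ (√(u k) + e k) / k := by gcongr
      _ = √(u k) / k + e k / k := add_div _ _ _
  have : √a = 0 := le_antisymm (by linarith) (Real.sqrt_nonneg a)
  exact Real.sqrt_eq_zero'.mp this

theorem quadratic_doubling_le_general (f : ℕ → ℝ) (l2 l1 l0 : ℝ)
    (hf : ∀ k : ℕ, f k = l2 * (k : ℝ) ^ 2 + l1 * (k : ℝ) + l0)
    (hdbl : ∀ k : ℕ, 1 ≤ k → Real.sqrt (f (2 * k)) ≤ Real.sqrt (f k) + 2 * Real.sqrt k) :
    l2 ≤ 0 := by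
  have hquad : Tendsto (fun k : ℕ => f k / (k : ℝ) ^ 2) atTop (𝓝 l2) := by
    simpa only [hf] using tendsto_quadratic_div_sq l2 l1 l0
  have herr : Tendsto (fun k : ℕ => 2 * √(k : ℝ) / k) atTop (𝓝 0) := by
    simpa only [mul_div_assoc, mul_zero] using tendsto_sqrt_natCast_div_natCast.const_mul 2
  exact nonpos_of_sqrt_two_mul_le_add hquad herr (eventually_atTop.mpr ⟨1, hdbl⟩)

/-- A nonnegative quadratic `f(k) = λ₂k² + λ₁k + λ₀` on positive integers
satisfying `√(f(2k)) ≤ √(f(k)) + 2√k` has `λ₂ ≤ 0`. -/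
theorem quadratic_doubling_le (f : ℕ → ℝ) (l2 l1 l0 : ℝ)
    (hf : ∀ k : ℕ, f k = l2 * (k : ℝ) ^ 2 + l1 * (k : ℝ) + l0)
    (hnonneg : ∀ k : ℕ, 1 ≤ k → 0 ≤ f k)
    (hdbl : ∀ k : ℕ, 1 ≤ k → Real.sqrt (f (2 * k)) ≤ Real.sqrt (f k) + 2 * Real.sqrt k) :
    l2 ≤ 0 :=
  quadratic_doubling_le_general f l2 l1 l0 hf hdbl
end

section
/- Let f : ℕ → ℝ≥0 satisfy f(k) = λ₂k² + λ₁k + λ₀ with λ₂ ≥ 0 and √(f(2k)) ≤ √(f(k)) + 2√k for all k ≥ 1. Then λ₂ = 0 and moreover f(2) − f(1) equals the constant increment f(k+1) − f(k) for all k. -/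
/-- A nonnegative quadratic `f(k) = λ₂k² + λ₁k + λ₀` with `λ₂ ≥ 0` satisfying the
doubling inequality `√(f(2k)) ≤ √(f(k)) + 2√k` for all `k ≥ 1` is linear: `λ₂ = 0`,
and its successive differences are constant, equal to `f(2) − f(1)`. -/
theorem quadratic_doubling_linear (f : ℕ → ℝ) (l2 l1 l0 : ℝ)
    (hf : ∀ k : ℕ, f k = l2 * (k : ℝ) ^ 2 + l1 * (k : ℝ) + l0)
    (hnonneg : ∀ k : ℕ, 0 ≤ f k)
    (hl2 : 0 ≤ l2)
    (hdbl : ∀ k : ℕ, 1 ≤ k → Real.sqrt (f (2 * k)) ≤ Real.sqrt (f k) + 2 * Real.sqrt k) :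
    l2 = 0 ∧ ∀ k : ℕ, f (k + 1) - f k = f 2 - f 1 := by
  have hC : (0:ℝ) ≤ l2 + |l1| + |l0| := by positivity
  set C : ℝ := l2 + |l1| + |l0| with hCdef
  set D : ℝ := 4 * Real.sqrt C + 4 + |l1| with hDdef
  have hD : 0 ≤ D := by positivity
  -- key inequality: 3 l2 √k ≤ D for all k ≥ 1
  have key : ∀ k : ℕ, 1 ≤ k → 3 * l2 * Real.sqrt k ≤ D := by
    intro k hk
    have hk1 : (1:ℝ) ≤ (k:ℝ) := by exact_mod_cast hk
    have hk0 : (0:ℝ) ≤ (k:ℝ) := by linarith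
    have hsk1 : (1:ℝ) ≤ Real.sqrt k := by
      rw [show (1:ℝ) = Real.sqrt 1 by simp]
      exact Real.sqrt_le_sqrt hk1
    have hsk0 : (0:ℝ) ≤ Real.sqrt k := Real.sqrt_nonneg _
    have hsq : Real.sqrt k * Real.sqrt k = (k:ℝ) := Real.mul_self_sqrt hk0
    -- square the doubling inequality
    have h1 := hdbl k hk
    have h2 : f (2 * k) ≤ f k + 4 * Real.sqrt (f k) * Real.sqrt k + 4 * k := by
      have hL : f (2 * k) = Real.sqrt (f (2 * k)) * Real.sqrt (f (2 * k)) :=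
        (Real.mul_self_sqrt (hnonneg _)).symm
      have hR0 : 0 ≤ Real.sqrt (f k) + 2 * Real.sqrt k := by positivity
      have := mul_self_le_mul_self (Real.sqrt_nonneg (f (2 * k))) h1
      rw [← hL] at this
      calc f (2 * k) ≤ (Real.sqrt (f k) + 2 * Real.sqrt k) *
            (Real.sqrt (f k) + 2 * Real.sqrt k) := this
        _ = Real.sqrt (f k) * Real.sqrt (f k) + 4 * Real.sqrt (f k) * Real.sqrt k
            + 4 * (Real.sqrt k * Real.sqrt k) := by ring
        _ = f k + 4 * Real.sqrt (f k) * Real.sqrt k + 4 * k := by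
            rw [Real.mul_self_sqrt (hnonneg k), hsq]
    -- bound √(f k) ≤ √C * k
    have hfk : f k ≤ C * (k:ℝ)^2 := by
      have h1k : (k:ℝ) ≤ (k:ℝ)^2 := by nlinarith
      have h2k : (1:ℝ) ≤ (k:ℝ)^2 := by nlinarith
      have hb1 : l1 * k ≤ |l1| * (k:ℝ)^2 := by
        calc l1 * k ≤ |l1| * k := by
              exact mul_le_mul_of_nonneg_right (le_abs_self l1) hk0
          _ ≤ |l1| * (k:ℝ)^2 := by
              exact mul_le_mul_of_nonneg_left h1k (abs_nonneg l1)
      have hb0 : l0 ≤ |l0| * (k:ℝ)^2 := by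
        calc l0 ≤ |l0| := le_abs_self l0
          _ ≤ |l0| * (k:ℝ)^2 := by nlinarith [abs_nonneg l0]
      rw [hf k, hCdef]; nlinarith
    have hsfk : Real.sqrt (f k) ≤ Real.sqrt C * k := by
      calc Real.sqrt (f k) ≤ Real.sqrt (C * (k:ℝ)^2) := Real.sqrt_le_sqrt hfk
        _ = Real.sqrt C * k := by
            rw [Real.sqrt_mul hC, Real.sqrt_sq hk0]
    -- f(2k) - f(k) = 3 l2 k² + l1 k
    have hdiff : f (2 * k) - f k = 3 * l2 * (k:ℝ)^2 + l1 * k := by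
      rw [hf (2 * k), hf k]; push_cast; ring
    have h3 : 3 * l2 * (k:ℝ)^2 ≤ 4 * Real.sqrt C * k * Real.sqrt k + (4 + |l1|) * k := by
      have hb1 : -(l1 * k) ≤ |l1| * k := by
        have := neg_abs_le l1
        nlinarith
      nlinarith [mul_le_mul_of_nonneg_right hsfk hsk0]
    -- now divide by k √k
    have hk2 : (k:ℝ)^2 = (k * Real.sqrt k) * Real.sqrt k := by
      rw [mul_assoc, hsq]; ring
    have hkk : (k:ℝ) ≤ (k:ℝ) * Real.sqrt k := by nlinarith
    have h4 : 3 * l2 * ((k * Real.sqrt k) * Real.sqrt k) ≤ D * (k * Real.sqrt k) := by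
      rw [← hk2]
      calc 3 * l2 * (k:ℝ)^2 ≤ 4 * Real.sqrt C * k * Real.sqrt k + (4 + |l1|) * k := h3
        _ = 4 * Real.sqrt C * (k * Real.sqrt k) + (4 + |l1|) * k := by ring
        _ ≤ 4 * Real.sqrt C * (k * Real.sqrt k) + (4 + |l1|) * (k * Real.sqrt k) := by
            have h0l : (0:ℝ) ≤ 4 + |l1| := by positivity
            have := mul_le_mul_of_nonneg_left hkk h0l
            linarith
        _ = D * (k * Real.sqrt k) := by rw [hDdef]; ring
    have hpos : (0:ℝ) < k * Real.sqrt k := mul_pos (by linarith) (by linarith)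
    have := (mul_le_mul_iff_of_pos_right hpos).mp (by linarith [h4] :
      (3 * l2 * Real.sqrt k) * (k * Real.sqrt k) ≤ D * (k * Real.sqrt k))
    exact this
  -- conclude l2 = 0
  have hl2z : l2 = 0 := by
    by_contra h
    have hl2p : 0 < l2 := lt_of_le_of_ne hl2 (Ne.symm h)
    obtain ⟨n, hn⟩ := exists_nat_gt ((D / (3 * l2))^2)
    have hn1 : 1 ≤ n := by
      by_contra hc
      push_neg at hc
      interval_cases n
      simp at hn
      nlinarith [sq_nonneg (D / (3 * l2))]
    have hsn : D / (3 * l2) < Real.sqrt n := by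
      have h1 : Real.sqrt ((D / (3 * l2))^2) < Real.sqrt n :=
        Real.sqrt_lt_sqrt (sq_nonneg _) hn
      rwa [Real.sqrt_sq (by positivity)] at h1
    have := key n hn1
    have h2 : D < 3 * l2 * Real.sqrt n := by
      rw [div_lt_iff₀ (by positivity)] at hsn
      linarith [hsn]
    linarith
  refine ⟨hl2z, fun k => ?_⟩
  rw [hf (k+1), hf k, hf 2, hf 1, hl2z]
  push_cast; ring
end
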